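/- Let s ↦ (r(s),θ(s)) be any C² solution of the static scale-invariant system. Then the geodesic-curvature expression k(s) = r^{−1/2}·(r·r̈·θ̇ − r·θ̇³/2 − r·θ̈·ṙ − ṙ²·θ̇) satisfies k(s) = d/ds(−(1/2)·r(s)^{−1/2}·θ(s)); equivalently k(s) = r^{−1/2}(ṙθ/(4r) − θ̇/2). Consequently, if θ(s₁) = 0 = θ(s₂), then ∫_{s₁}^{s₂} k(s) ds = 0. -/

import Mathlib

/-!
Substituting the two second-order equations of the static system into `k`, the bracket
becomes `(ṙθ/(4r) - θ̇/2)(ṙ² + rθ̇²)`, and the unit-speed condition removes the last factor.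
The resulting expression `r^{-1/2}(ṙθ/(4r) - θ̇/2)` is exactly the derivative of
`-(1/2) r^{-1/2} θ`, so `∫ k` between two zeros of `θ` vanishes by the fundamental theorem
of calculus.
-/

open Set MeasureTheory

/-- The geodesic-curvature expression along a solution of the static scale-invariant
system for the model metric `ds² = dr² + r dθ²`. -/
noncomputable def staticCurvature (r θ : ℝ → ℝ) (s : ℝ) : ℝ :=
  (Real.sqrt (r s))⁻¹ *
    (r s * deriv (deriv r) s * deriv θ s - r s * (deriv θ s) ^ 3 / 2
      - r s * deriv (deriv θ) s * deriv r s - (deriv r s) ^ 2 * deriv θ s)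

theorem ContDiff.continuous_deriv_deriv {𝕜 F : Type*} [NontriviallyNormedField 𝕜]
    [NormedAddCommGroup F] [NormedSpace 𝕜 F] {f : 𝕜 → F} (hf : ContDiff 𝕜 2 f) :
    Continuous (deriv (deriv f)) :=
  (hf.iterate_deriv' 0 2).continuous

theorem staticCurvature_eq_of_static_system {r θ : ℝ → ℝ} {s : ℝ} (hr : 0 < r s)
    (heq₁ : 4 * (r s) ^ 2 * deriv (deriv r) s = r s * θ s * deriv r s * deriv θ s)
    (heq₂ : 4 * (r s) ^ 2 * deriv (deriv θ) s + 2 * r s * deriv r s * deriv θ s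
        + θ s * (deriv r s) ^ 2 = 0)
    (hunit : (deriv r s) ^ 2 + r s * (deriv θ s) ^ 2 = 1) :
    staticCurvature r θ s =
      (Real.sqrt (r s))⁻¹ * (deriv r s * θ s / (4 * r s) - deriv θ s / 2) := by
  unfold staticCurvature
  congr 1
  field_simp
  linear_combination 2 * deriv θ s * heq₁ - 2 * deriv r s * heq₂
    + 2 * (deriv r s * θ s - 2 * r s * deriv θ s) * hunit

theorem hasDerivAt_neg_half_inv_sqrt_mul {r θ : ℝ → ℝ} {s : ℝ}
    (hr : DifferentiableAt ℝ r s) (hθ : DifferentiableAt ℝ θ s) (hpos : 0 < r s) :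
    HasDerivAt (fun u => -(1 / 2) * (Real.sqrt (r u))⁻¹ * θ u)
      ((Real.sqrt (r s))⁻¹ * (deriv r s * θ s / (4 * r s) - deriv θ s / 2)) s := by
  have hsqrt_pos : 0 < Real.sqrt (r s) := Real.sqrt_pos.mpr hpos
  have hinv_sqrt : HasDerivAt (fun u => (Real.sqrt (r u))⁻¹)
      (-(1 / (2 * Real.sqrt (r s)) * deriv r s) / Real.sqrt (r s) ^ 2) s :=
    ((Real.hasDerivAt_sqrt hpos.ne').comp s hr.hasDerivAt).inv hsqrt_pos.ne'
  refine ((hinv_sqrt.const_mul (-(1 / 2))).mul hθ.hasDerivAt).congr_deriv ?_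
  -- abstract `√(r s)` so that the rewrite below only touches the bare `r s`
  set q := Real.sqrt (r s)
  rw [← Real.sq_sqrt hpos.le]
  field_simp
  ring

theorem continuousOn_staticCurvature {r θ : ℝ → ℝ} {U : Set ℝ}
    (hr : ContDiff ℝ 2 r) (hθ : ContDiff ℝ 2 θ) (hpos : ∀ s ∈ U, 0 < r s) :
    ContinuousOn (staticCurvature r θ) U := by
  have hr' := hr.continuous_deriv (by norm_num)
  have hθ' := hθ.continuous_deriv (by norm_num)
  have hr'' := hr.continuous_deriv_deriv
  have hθ'' := hθ.continuous_deriv_deriv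
  have hr₀ := hr.continuous
  have hθ₀ := hθ.continuous
  refine ContinuousOn.mul ?_ (by fun_prop)
  exact (Real.continuous_sqrt.comp hr₀).continuousOn.inv₀
    fun s hs => (Real.sqrt_pos.mpr (hpos s hs)).ne'

/-- Along any `C²` solution of the static scale-invariant system (on an open interval),
the geodesic curvature `k` satisfies `k = d/ds(−(1/2) r^{−1/2} θ)`, equivalently
`k = r^{−1/2}(ṙθ/(4r) − θ̇/2)`; consequently `∫_{s₁}^{s₂} k ds = 0` whenever
`θ(s₁) = 0 = θ(s₂)`. -/
theorem static_curvature_total_integral_zero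
    (r θ : ℝ → ℝ) (a b : ℝ)
    (hr : ContDiff ℝ 2 r) (hθ : ContDiff ℝ 2 θ)
    (hrpos : ∀ s ∈ Set.Ioo a b, 0 < r s)
    (heq₁ : ∀ s ∈ Set.Ioo a b,
      4 * (r s) ^ 2 * deriv (deriv r) s = r s * θ s * deriv r s * deriv θ s)
    (heq₂ : ∀ s ∈ Set.Ioo a b,
      4 * (r s) ^ 2 * deriv (deriv θ) s + 2 * r s * deriv r s * deriv θ s
        + θ s * (deriv r s) ^ 2 = 0)
    (hunit : ∀ s ∈ Set.Ioo a b, (deriv r s) ^ 2 + r s * (deriv θ s) ^ 2 = 1) :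
    (∀ s ∈ Set.Ioo a b,
      staticCurvature r θ s =
        deriv (fun u => -(1 / 2) * (Real.sqrt (r u))⁻¹ * θ u) s ∧
      staticCurvature r θ s =
        (Real.sqrt (r s))⁻¹ * (deriv r s * θ s / (4 * r s) - deriv θ s / 2)) ∧
    ∀ s₁ ∈ Set.Ioo a b, ∀ s₂ ∈ Set.Ioo a b, θ s₁ = 0 → θ s₂ = 0 →
      ∫ s in s₁..s₂, staticCurvature r θ s = 0 := by
  have hk : ∀ s ∈ Ioo a b, staticCurvature r θ s =
      (Real.sqrt (r s))⁻¹ * (deriv r s * θ s / (4 * r s) - deriv θ s / 2) := fun s hs =>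
    staticCurvature_eq_of_static_system (hrpos s hs) (heq₁ s hs) (heq₂ s hs) (hunit s hs)
  have hderiv : ∀ s ∈ Ioo a b,
      HasDerivAt (fun u => -(1 / 2) * (Real.sqrt (r u))⁻¹ * θ u) (staticCurvature r θ s) s :=
    fun s hs => hk s hs ▸ hasDerivAt_neg_half_inv_sqrt_mul
      (hr.differentiable (by norm_num) s) (hθ.differentiable (by norm_num) s) (hrpos s hs)
  refine ⟨fun s hs => ⟨(hderiv s hs).deriv.symm, hk s hs⟩, ?_⟩
  intro s₁ hs₁ s₂ hs₂ hθ₁ hθ₂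
  have hsub : uIcc s₁ s₂ ⊆ Ioo a b := ordConnected_Ioo.uIcc_subset hs₁ hs₂
  have hint : IntervalIntegrable (staticCurvature r θ) volume s₁ s₂ :=
    ((continuousOn_staticCurvature hr hθ hrpos).mono hsub).intervalIntegrable
  rw [intervalIntegral.integral_eq_sub_of_hasDerivAt (fun s hs => hderiv s (hsub hs)) hint,
    hθ₁, hθ₂]
  ring
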